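/- Let d ≥ 1, q > 0, τ > 0, and let x_1, …, x_k ∈ ℝ^d with ‖x_s‖_2 ≤ 1 for all s ∈ [k]. Set V_s = τ·I_d + Σ_{t=1}^{s} x_t x_tᵀ and let J ⊆ [k] be the set of indices s with x_sᵀ V_{s-1}^{-1} x_s ≥ q. Then |J| ≤ (d/ln(1+q)) · ln(1 + |J|/(d·τ)). -/

import Mathlib

/-!
Let `W S = τ I + ∑_{t ∈ S} x_t x_tᵀ`, so that `V s = W [1, s]`. For `s ∈ J` the earlier indices
of `J` lie in `[1, s - 1]`, hence `W {t ∈ J | t < s} ≤ V (s - 1)` in the Loewner order and the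
potential of `x_s` against this smaller matrix is still at least `q`. By the matrix determinant
lemma, adding `x_s` multiplies the determinant by one plus this potential, so
`det (W J) ≥ τ^d (1 + q)^|J|`. On the other hand AM–GM on the eigenvalues gives
`det (W J) ≤ (tr (W J) / d)^d ≤ (τ + |J| / d)^d`; taking logarithms of
`(1 + q)^|J| ≤ (1 + |J| / (d τ))^d` yields the bound.
-/

open Matrix Finset

theorem Real.prod_le_sum_div_card_pow {ι : Type*} (s : Finset ι) (z : ι → ℝ)
    (hz : ∀ i ∈ s, 0 ≤ z i) : ∏ i ∈ s, z i ≤ ((∑ i ∈ s, z i) / #s) ^ #s := by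
  rcases s.eq_empty_or_nonempty with rfl | hs
  · simp
  have hcard : (0 : ℝ) < #s := by exact_mod_cast hs.card_pos
  have hamgm := Real.geom_mean_le_arith_mean s (fun _ => 1) z (fun _ _ => zero_le_one)
    (by simpa using hcard) hz
  simp only [Real.rpow_one, one_mul, sum_const, nsmul_one] at hamgm
  calc ∏ i ∈ s, z i = ((∏ i ∈ s, z i) ^ ((#s : ℝ)⁻¹)) ^ #s :=
        (Real.rpow_inv_natCast_pow (prod_nonneg hz) hs.card_pos.ne').symm
    _ ≤ _ := by gcongr; exact Real.rpow_nonneg (prod_nonneg hz) _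

namespace Matrix

variable {n : Type*} [Fintype n] [DecidableEq n]

theorem det_add_vecMulVec {R : Type*} [CommRing R] {A : Matrix n n R} (hA : IsUnit A.det)
    (u v : n → R) : (A + vecMulVec u v).det = A.det * (1 + v ⬝ᵥ A⁻¹ *ᵥ u) := by
  rw [vecMulVec_eq Unit, det_add_replicateCol_mul_replicateRow hA, det_unique (n := Unit),
    add_apply, one_apply_eq, Matrix.mul_assoc, ← replicateCol_mulVec,
    replicateRow_mul_replicateCol_apply]

theorem PosDef.two_mul_dotProduct_sub_le {A : Matrix n n ℝ} (hA : A.PosDef) (u y : n → ℝ) :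
    2 * (u ⬝ᵥ y) - y ⬝ᵥ A *ᵥ y ≤ u ⬝ᵥ A⁻¹ *ᵥ u := by
  set w := A⁻¹ *ᵥ u
  have hAw : A *ᵥ w = u := by
    rw [mulVec_mulVec, mul_nonsing_inv _ hA.det_pos.ne'.isUnit, one_mulVec]
  have hsymm : Aᵀ = A := by simpa using hA.isHermitian.eq
  have hwAy : w ⬝ᵥ A *ᵥ y = u ⬝ᵥ y := by
    rw [dotProduct_mulVec, ← mulVec_transpose, hsymm, hAw]
  have hsq : 0 ≤ (y - w) ⬝ᵥ A *ᵥ (y - w) := by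
    simpa using hA.posSemidef.dotProduct_mulVec_nonneg (y - w)
  rw [mulVec_sub, dotProduct_sub, sub_dotProduct, sub_dotProduct, hwAy, hAw,
    dotProduct_comm y u, dotProduct_comm w u] at hsq
  linarith

theorem PosDef.dotProduct_inv_mulVec_le {A B : Matrix n n ℝ} (hA : A.PosDef)
    (hAB : (B - A).PosSemidef) (u : n → ℝ) : u ⬝ᵥ B⁻¹ *ᵥ u ≤ u ⬝ᵥ A⁻¹ *ᵥ u := by
  have hB : B.PosDef := by simpa using hA.add_posSemidef hAB
  set y := B⁻¹ *ᵥ u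
  have hBy : B *ᵥ y = u := by
    rw [mulVec_mulVec, mul_nonsing_inv _ hB.det_pos.ne'.isUnit, one_mulVec]
  have hAB_y : 0 ≤ y ⬝ᵥ B *ᵥ y - y ⬝ᵥ A *ᵥ y := by
    simpa [sub_mulVec, dotProduct_sub] using hAB.dotProduct_mulVec_nonneg y
  have := hA.two_mul_dotProduct_sub_le u y
  rw [hBy, dotProduct_comm y u] at hAB_y
  linarith

theorem PosSemidef.det_le_trace_div_card_pow {A : Matrix n n ℝ} (hA : A.PosSemidef) :
    A.det ≤ (A.trace / Fintype.card n) ^ Fintype.card n := by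
  rw [hA.isHermitian.det_eq_prod_eigenvalues, hA.isHermitian.trace_eq_sum_eigenvalues]
  simp only [RCLike.ofReal_real_eq_id, id]
  simpa using Real.prod_le_sum_div_card_pow univ _ fun i _ => hA.eigenvalues_nonneg i

end Matrix

theorem EuclideanSpace.dotProduct_self_eq_norm_sq {n : Type*} [Fintype n]
    (x : EuclideanSpace ℝ n) : x.ofLp ⬝ᵥ x.ofLp = ‖x‖ ^ 2 := by
  rw [← real_inner_self_eq_norm_sq, EuclideanSpace.inner_eq_star_dotProduct, star_trivial]

section DesignMatrix

variable {ι n : Type*} [DecidableEq n]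

def designMatrix (τ : ℝ) (x : ι → n → ℝ) (S : Finset ι) : Matrix n n ℝ :=
  τ • 1 + ∑ t ∈ S, vecMulVec (x t) (x t)

variable {τ : ℝ} (x : ι → n → ℝ)

theorem designMatrix_insert [DecidableEq ι] {a : ι} {S : Finset ι} (ha : a ∉ S) :
    designMatrix τ x (insert a S) = designMatrix τ x S + vecMulVec (x a) (x a) := by
  rw [designMatrix, designMatrix, sum_insert ha, add_comm (vecMulVec _ _), add_assoc]

variable [Fintype n]

theorem posDef_designMatrix (hτ : 0 < τ) (S : Finset ι) : (designMatrix τ x S).PosDef := by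
  refine PosDef.add_posSemidef ?_ (posSemidef_sum S fun t _ => ?_)
  · rw [smul_one_eq_diagonal]
    exact posDef_diagonal_iff.mpr fun _ => hτ
  · simpa using posSemidef_vecMulVec_self_star (x t)

theorem dotProduct_inv_designMatrix_antitone (hτ : 0 < τ) {S T : Finset ι} (hST : S ⊆ T)
    (u : n → ℝ) :
    u ⬝ᵥ (designMatrix τ x T)⁻¹ *ᵥ u ≤ u ⬝ᵥ (designMatrix τ x S)⁻¹ *ᵥ u := by
  classical
  refine (posDef_designMatrix x hτ S).dotProduct_inv_mulVec_le ?_ u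
  have hdiff : designMatrix τ x T - designMatrix τ x S = ∑ t ∈ T \ S, vecMulVec (x t) (x t) := by
    rw [designMatrix, designMatrix, ← sum_sdiff hST]
    abel
  rw [hdiff]
  exact posSemidef_sum _ fun t _ => by simpa using posSemidef_vecMulVec_self_star (x t)

theorem trace_designMatrix (S : Finset ι) :
    (designMatrix τ x S).trace = τ * Fintype.card n + ∑ t ∈ S, x t ⬝ᵥ x t := by
  simp [designMatrix, trace_sum]

theorem det_designMatrix [LinearOrder ι] (hτ : 0 < τ) (S : Finset ι) :
    (designMatrix τ x S).det =
      τ ^ Fintype.card n * ∏ a ∈ S, (1 + x a ⬝ᵥ (designMatrix τ x {t ∈ S | t < a})⁻¹ *ᵥ x a) := by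
  induction S using Finset.induction_on_max with
  | empty => simp [designMatrix]
  | insert a S hlt ih =>
    have ha : a ∉ S := fun h => lt_irrefl a (hlt a h)
    have hbefore_a : {t ∈ insert a S | t < a} = S := by
      rw [filter_insert, if_neg (lt_irrefl a), filter_true_of_mem hlt]
    have hbefore : ∀ b ∈ S, {t ∈ insert a S | t < b} = {t ∈ S | t < b} := fun b hb => by
      rw [filter_insert, if_neg (hlt b hb).not_gt]
    rw [designMatrix_insert x ha,
      det_add_vecMulVec (posDef_designMatrix x hτ S).det_pos.ne'.isUnit, prod_insert ha,
      hbefore_a, prod_congr rfl fun b hb => by rw [hbefore b hb], ih]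
    ring

theorem pow_mul_pow_le_det_designMatrix [LinearOrder ι] (hτ : 0 < τ) {q : ℝ} (hq : -1 ≤ q)
    {S : Finset ι} (hS : ∀ a ∈ S, q ≤ x a ⬝ᵥ (designMatrix τ x {t ∈ S | t < a})⁻¹ *ᵥ x a) :
    τ ^ Fintype.card n * (1 + q) ^ #S ≤ (designMatrix τ x S).det := by
  rw [det_designMatrix x hτ, ← prod_const]
  gcongr with a ha
  · exact fun _ _ => by linarith
  · exact hS a ha

theorem trace_designMatrix_le {S : Finset ι} (hS : ∀ t ∈ S, x t ⬝ᵥ x t ≤ 1) :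
    (designMatrix τ x S).trace ≤ τ * Fintype.card n + #S := by
  rw [trace_designMatrix]
  gcongr
  exact (sum_le_card_nsmul S _ 1 hS).trans (by simp)

theorem det_designMatrix_le [Nonempty n] (hτ : 0 < τ) {S : Finset ι}
    (hS : ∀ t ∈ S, x t ⬝ᵥ x t ≤ 1) :
    (designMatrix τ x S).det ≤ (τ + #S / Fintype.card n) ^ Fintype.card n := by
  have hW := (posDef_designMatrix x hτ S).posSemidef
  have hn : (0 : ℝ) < Fintype.card n := by exact_mod_cast Fintype.card_pos
  refine hW.det_le_trace_div_card_pow.trans ?_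
  gcongr
  · exact div_nonneg hW.trace_nonneg hn.le
  · rw [div_le_iff₀ hn, add_mul, div_mul_cancel₀ _ hn.ne']
    exact trace_designMatrix_le x hS

end DesignMatrix

/-- Intermediate counting bound in the proof of the elliptical potential count lemma:
with `J` the set of indices `s ∈ [k]` where `(x s)ᵀ (V (s-1))⁻¹ (x s) ≥ q`, we have
`|J| ≤ (d / ln(1+q)) · ln(1 + |J| / (d·τ))`. -/
theorem elliptical_potential_count_implicit
    (d k : ℕ) (hd : 1 ≤ d) (q τ : ℝ) (hq : 0 < q) (hτ : 0 < τ)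
    (x : ℕ → EuclideanSpace ℝ (Fin d))
    (hx : ∀ s ∈ Finset.Icc 1 k, ‖x s‖ ≤ 1)
    (V : ℕ → Matrix (Fin d) (Fin d) ℝ)
    (hV : ∀ s, V s = τ • (1 : Matrix (Fin d) (Fin d) ℝ)
        + ∑ t ∈ Finset.Icc 1 s, Matrix.vecMulVec (x t) (x t))
    (J : Finset ℕ)
    (hJ : J = (Finset.Icc 1 k).filter (fun s => q ≤ x s ⬝ᵥ (V (s - 1))⁻¹ *ᵥ x s)) :
    (J.card : ℝ) ≤ (d / Real.log (1 + q))
        * Real.log (1 + (J.card : ℝ) / (d * τ)) := by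
  set y : ℕ → Fin d → ℝ := fun t => x t
  have hJk : J ⊆ Icc 1 k := hJ ▸ filter_subset _ _
  have hpot : ∀ s ∈ J, q ≤ y s ⬝ᵥ (designMatrix τ y {t ∈ J | t < s})⁻¹ *ᵥ y s := by
    intro s hs
    have hpast : {t ∈ J | t < s} ⊆ Icc 1 (s - 1) := fun t ht => by
      have htk := hJk (mem_filter.mp ht).1
      simp only [mem_filter, mem_Icc] at ht htk ⊢
      omega
    rw [hJ, mem_filter, hV] at hs
    exact hs.2.trans (dotProduct_inv_designMatrix_antitone y hτ hpast _)
  have : NeZero d := ⟨by omega⟩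
  have hlower := pow_mul_pow_le_det_designMatrix y hτ (by linarith) hpot
  have hupper := det_designMatrix_le y hτ (S := J) fun t ht => by
    rw [show y t = (x t).ofLp from rfl, EuclideanSpace.dotProduct_self_eq_norm_sq]
    exact pow_le_one₀ (norm_nonneg _) (hx t (hJk ht))
  have hpow : (1 + q) ^ #J ≤ (1 + #J / (d * τ)) ^ d := by
    have hτd : τ + #J / d = τ * (1 + #J / (d * τ)) := by field_simp
    rw [Fintype.card_fin, hτd, mul_pow] at hupper
    rw [Fintype.card_fin] at hlower
    exact le_of_mul_le_mul_left (hlower.trans hupper) (by positivity)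
  have hlog := Real.log_le_log (by positivity) hpow
  rw [Real.log_pow, Real.log_pow] at hlog
  rw [div_mul_eq_mul_div, le_div_iff₀ (Real.log_pos (by linarith))]
  exact_mod_cast hlog
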